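/- Let L, M, N be positive integers and let g_0, …, g_{L−1} ∈ ℓ²(ℤ²,ℍ) be such that G(g,L,M,N) is a Parseval frame for ℓ²(ℤ²,ℍ) and an orthonormal system (pairwise quaternionic inner products equal the Kronecker delta). Then L is a perfect square: there exists a positive integer K with L = K². -/
import Mathlib


noncomputable section

open scoped Real

/-- The real quaternions. -/
abbrev ℍ : Type := Quaternion ℝ

/-- `e_i θ = cos θ + (sin θ) i`. -/
def eI (θ : ℝ) : ℍ := ⟨Real.cos θ, Real.sin θ, 0, 0⟩

/-- `e_j θ = cos θ + (sin θ) j`. -/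
def eJ (θ : ℝ) : ℍ := ⟨Real.cos θ, 0, Real.sin θ, 0⟩

/-- Quaternionic pairing `⟨f,g⟩ = ∑ conj (f k) * g k`. -/
def qpair (f g : ℤ × ℤ → ℍ) : ℍ := ∑' k : ℤ × ℤ, star (f k) * g k

/-- Membership in `ℓ²(ℤ², ℍ)`. -/
def MemL2 (f : ℤ × ℤ → ℍ) : Prop := Summable fun k : ℤ × ℤ => ‖f k‖ ^ 2

/-- `‖f‖² = ∑ |f k|²`. -/
def normSq2 (f : ℤ × ℤ → ℍ) : ℝ := ∑' k : ℤ × ℤ, ‖f k‖ ^ 2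

/-- A window is real-valued if all its values lie in `ℝ ⊆ ℍ`. -/
def IsRealValued (f : ℤ × ℤ → ℍ) : Prop := ∀ k : ℤ × ℤ, f k = ((f k).re : ℍ)

/-- The Gabor atom `E_{m/M} T_{nN} w`. -/
def gaborAtom (M N : ℕ) (w : ℤ × ℤ → ℍ) (m : ℕ × ℕ) (n : ℤ × ℤ) : ℤ × ℤ → ℍ :=
  fun k =>
    eI (2 * π * (m.1 : ℝ) * (k.1 : ℝ) / (M : ℝ)) *
      w (k.1 - n.1 * (N : ℤ), k.2 - n.2 * (N : ℤ)) *
      eJ (2 * π * (m.2 : ℝ) * (k.2 : ℝ) / (M : ℝ))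

/-- The index square `{0, …, M-1}²`. -/
abbrev msq (M : ℕ) : Finset (ℕ × ℕ) := Finset.range M ×ˢ Finset.range M

/-- `k ∈ {0, …, N-1}²` inside `ℤ²`. -/
def InNsq (N : ℕ) (k : ℤ × ℤ) : Prop :=
  0 ≤ k.1 ∧ k.1 < (N : ℤ) ∧ 0 ≤ k.2 ∧ k.2 < (N : ℤ)

/-- `∑_{l<L} ∑_{n∈ℤ²} ∑_{m∈{0,…,M-1}²} |⟨E_{m/M}T_{nN}g_l, h⟩|²`. -/
def frameSum (L M N : ℕ) (g : ℕ → ℤ × ℤ → ℍ) (h : ℤ × ℤ → ℍ) : ℝ :=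
  ∑ l ∈ Finset.range L, ∑' n : ℤ × ℤ, ∑ m ∈ msq M,
    ‖qpair (gaborAtom M N (g l) m n) h‖ ^ 2

/-- Bessel system with bound `B`. -/
def IsBessel (L M N : ℕ) (g : ℕ → ℤ × ℤ → ℍ) (B : ℝ) : Prop :=
  ∀ h : ℤ × ℤ → ℍ, MemL2 h → frameSum L M N g h ≤ B * normSq2 h

/-- Frame with bounds `A ≤ B`. -/
def IsFrame (L M N : ℕ) (g : ℕ → ℤ × ℤ → ℍ) (A B : ℝ) : Prop :=
  ∀ h : ℤ × ℤ → ℍ, MemL2 h →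
    A * normSq2 h ≤ frameSum L M N g h ∧ frameSum L M N g h ≤ B * normSq2 h

/-- Parseval frame. -/
def IsParseval (L M N : ℕ) (g : ℕ → ℤ × ℤ → ℍ) : Prop :=
  ∀ h : ℤ × ℤ → ℍ, MemL2 h → frameSum L M N g h = normSq2 h

/-- Orthonormal system. -/
def IsON (L M N : ℕ) (g : ℕ → ℤ × ℤ → ℍ) : Prop :=
  ∀ l l' : ℕ, l < L → l' < L → ∀ m ∈ msq M, ∀ m' ∈ msq M, ∀ n n' : ℤ × ℤ,
    qpair (gaborAtom M N (g l) m n) (gaborAtom M N (g l') m' n') =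
      if l = l' ∧ m = m' ∧ n = n' then 1 else 0

/-- `G(k,p) = ∑_{l<L} ∑_{n∈ℤ²} g_l(k-nN) g_l(k+pM-nN)`. -/
def gaborG (L M N : ℕ) (g : ℕ → ℤ × ℤ → ℍ) (k p : ℤ × ℤ) : ℍ :=
  ∑ l ∈ Finset.range L, ∑' n : ℤ × ℤ,
    g l (k.1 - n.1 * (N : ℤ), k.2 - n.2 * (N : ℤ)) *
      g l (k.1 + p.1 * (M : ℤ) - n.1 * (N : ℤ), k.2 + p.2 * (M : ℤ) - n.2 * (N : ℤ))

/-- Mixed version: `∑_{l<L} ∑_{n∈ℤ²} g_l(k-nN) h_l(k+pM-nN)`. -/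
def gaborGmix (L M N : ℕ) (g h : ℕ → ℤ × ℤ → ℍ) (k p : ℤ × ℤ) : ℍ :=
  ∑ l ∈ Finset.range L, ∑' n : ℤ × ℤ,
    g l (k.1 - n.1 * (N : ℤ), k.2 - n.2 * (N : ℤ)) *
      h l (k.1 + p.1 * (M : ℤ) - n.1 * (N : ℤ), k.2 + p.2 * (M : ℤ) - n.2 * (N : ℤ))

/-- `∑_{l<L} ∑_{n∈ℤ²} |g_l(k-nN)|²`. -/
def winSum (L N : ℕ) (g : ℕ → ℤ × ℤ → ℍ) (k : ℤ × ℤ) : ℝ :=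
  ∑ l ∈ Finset.range L, ∑' n : ℤ × ℤ,
    ‖g l (k.1 - n.1 * (N : ℤ), k.2 - n.2 * (N : ℤ))‖ ^ 2

/-- Support of diameter `< M` in every row and every column. -/
def DiamLt (M : ℕ) (f : ℤ × ℤ → ℍ) : Prop :=
  (∀ k₂ k₁ k₁' : ℤ, f (k₁, k₂) ≠ 0 → f (k₁', k₂) ≠ 0 → |k₁ - k₁'| < (M : ℤ)) ∧
  (∀ k₁ k₂ k₂' : ℤ, f (k₁, k₂) ≠ 0 → f (k₁, k₂') ≠ 0 → |k₂ - k₂'| < (M : ℤ))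

/-- `M`-periodicity. -/
def MPeriodic (M : ℕ) (f : ℤ × ℤ → ℍ) : Prop :=
  ∀ k : ℤ × ℤ, f (k.1 + (M : ℤ), k.2) = f k ∧ f (k.1, k.2 + (M : ℤ)) = f k

/-- Duality of two Gabor systems (on finitely supported sequences). -/
def AreDual (L M N : ℕ) (g h : ℕ → ℤ × ℤ → ℍ) : Prop :=
  ∀ f φ : ℤ × ℤ → ℍ, (Function.support f).Finite → (Function.support φ).Finite →
    (∑ l ∈ Finset.range L, ∑' n : ℤ × ℤ, ∑ m ∈ msq M,
      qpair f (gaborAtom M N (g l) m n) * qpair (gaborAtom M N (h l) m n) φ)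
      = qpair f φ

section Aux

open Quaternion

lemma norm_eI (θ : ℝ) : ‖eI θ‖ = 1 := by
  have h : normSq (eI θ) = 1 := by
    rw [Quaternion.normSq_def']
    show Real.cos θ ^ 2 + Real.sin θ ^ 2 + 0 ^ 2 + 0 ^ 2 = 1
    rw [Real.cos_sq_add_sin_sq]; ring
  have h2 := Quaternion.normSq_eq_norm_mul_self (eI θ)
  nlinarith [norm_nonneg (eI θ)]

lemma norm_eJ (θ : ℝ) : ‖eJ θ‖ = 1 := by
  have h : normSq (eJ θ) = 1 := by
    rw [Quaternion.normSq_def']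
    show Real.cos θ ^ 2 + 0 ^ 2 + Real.sin θ ^ 2 + 0 ^ 2 = 1
    nlinarith [Real.cos_sq_add_sin_sq θ]
  have h2 := Quaternion.normSq_eq_norm_mul_self (eJ θ)
  nlinarith [norm_nonneg (eJ θ)]

lemma eI_zero : eI 0 = 1 := by
  ext <;> simp [eI]

lemma eJ_zero : eJ 0 = 1 := by
  ext <;> simp [eJ]

lemma gaborAtom_norm (M N : ℕ) (w : ℤ × ℤ → ℍ) (m : ℕ × ℕ) (n k : ℤ × ℤ) :
    ‖gaborAtom M N w m n k‖ = ‖w (k.1 - n.1 * (N : ℤ), k.2 - n.2 * (N : ℤ))‖ := by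
  unfold gaborAtom
  rw [norm_mul, norm_mul, norm_eI, norm_eJ, one_mul, mul_one]

/-- Delta function. -/
def qdelta (k : ℤ × ℤ) : ℤ × ℤ → ℍ := fun j => if j = k then 1 else 0

lemma memL2_qdelta (k : ℤ × ℤ) : MemL2 (qdelta k) := by
  apply summable_of_ne_finset_zero (s := {k})
  intro j hj
  simp only [Finset.mem_singleton] at hj
  simp [qdelta, hj]

lemma normSq2_qdelta (k : ℤ × ℤ) : normSq2 (qdelta k) = 1 := by
  unfold normSq2
  rw [tsum_eq_single k]
  · simp [qdelta]
  · intro j hj; simp [qdelta, hj]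

lemma qpair_qdelta (f : ℤ × ℤ → ℍ) (k : ℤ × ℤ) : qpair f (qdelta k) = star (f k) := by
  unfold qpair
  rw [tsum_eq_single k]
  · simp [qdelta]
  · intro j hj; simp [qdelta, hj]

lemma star_mul_self_eq (q : ℍ) : star q * q = ((‖q‖ ^ 2 : ℝ) : ℍ) := by
  rw [Quaternion.star_mul_self]
  congr 1
  rw [Quaternion.normSq_eq_norm_mul_self, sq]

end Aux

section Reindex

/-- `(r, n) ↦ r - n*N` is a bijection `Fin N × ℤ ≃ ℤ`. -/
def nfold (N : ℕ) (hN : 0 < N) : (Fin N × ℤ) ≃ ℤ where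
  toFun p := (p.1 : ℤ) - p.2 * N
  invFun j := (⟨(j % (N : ℤ)).toNat, by
      have hN' : (0 : ℤ) < N := by exact_mod_cast hN
      have h1 : 0 ≤ j % (N : ℤ) := Int.emod_nonneg j hN'.ne'
      have h2 : j % (N : ℤ) < N := Int.emod_lt_of_pos j hN'
      omega⟩, -(j / (N : ℤ)))
  left_inv := by
    rintro ⟨r, n⟩
    have hN' : (0 : ℤ) < N := by exact_mod_cast hN
    have hr0 : (0 : ℤ) ≤ (r : ℤ) := Int.natCast_nonneg _
    have hrN : (r : ℤ) < N := by exact_mod_cast r.isLt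
    have hkey : (r : ℤ) - n * N = (r : ℤ) + (-n) * N := by ring
    have hmod : ((r : ℤ) - n * N) % N = r := by
      rw [hkey, Int.add_mul_emod_self_right, Int.emod_eq_of_lt hr0 hrN]
    have hdiv : ((r : ℤ) - n * N) / N = -n := by
      rw [hkey, Int.add_mul_ediv_right _ _ hN'.ne',
        Int.ediv_eq_zero_of_lt hr0 hrN, zero_add]
    simp only [Prod.mk.injEq]
    constructor
    · apply Fin.ext
      simp [hmod]
    · rw [hdiv, neg_neg]
  right_inv := by
    intro j
    have hN' : (0 : ℤ) < N := by exact_mod_cast hN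
    have h1 : 0 ≤ j % (N : ℤ) := Int.emod_nonneg j hN'.ne'
    simp only []
    rw [Int.toNat_of_nonneg h1]
    have := Int.emod_add_mul_ediv j (N : ℤ)
    linarith [this]

/-- The double bijection `(Fin N × Fin N) × (ℤ × ℤ) ≃ ℤ × ℤ`. -/
def nfold2 (N : ℕ) (hN : 0 < N) : ((Fin N × Fin N) × (ℤ × ℤ)) ≃ (ℤ × ℤ) :=
  (Equiv.prodProdProdComm _ _ _ _).trans ((nfold N hN).prodCongr (nfold N hN))

lemma nfold2_apply (N : ℕ) (hN : 0 < N) (p : (Fin N × Fin N) × (ℤ × ℤ)) :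
    nfold2 N hN p = ((p.1.1 : ℤ) - p.2.1 * N, (p.1.2 : ℤ) - p.2.2 * N) := rfl

lemma reindex_sum (N : ℕ) (hN : 0 < N) (c : ℤ × ℤ → ℝ) (hc : Summable c) :
    ∑ κ : Fin N × Fin N, ∑' n : ℤ × ℤ,
        c ((κ.1 : ℤ) - n.1 * N, (κ.2 : ℤ) - n.2 * N) = ∑' j : ℤ × ℤ, c j := by
  set E := nfold2 N hN
  have hs : Summable (c ∘ E) := E.summable_iff.mpr hc
  have h1 : ∑' j : ℤ × ℤ, c j = ∑' p : (Fin N × Fin N) × (ℤ × ℤ), c (E p) :=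
    (E.tsum_eq c).symm
  have h2 : ∑' p : (Fin N × Fin N) × (ℤ × ℤ), c (E p) =
      ∑' κ : Fin N × Fin N, ∑' n : ℤ × ℤ, c (E (κ, n)) :=
    Summable.tsum_prod' hs fun κ => hs.prod_factor κ
  rw [h1, h2, tsum_fintype]
  rfl

end Reindex

/-- the number of windows of a Gabor orthonormal basis is a perfect
square. -/
theorem stmt_12 (L M N : ℕ) (hL : 0 < L) (hM : 0 < M) (hN : 0 < N)
    (g : ℕ → ℤ × ℤ → ℍ) (hg : ∀ l < L, MemL2 (g l))
    (hpar : IsParseval L M N g) (hon : IsON L M N g) :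
    ∃ K : ℕ, 0 < K ∧ L = K ^ 2 := by
  -- Step 1: testing Parseval on delta functions gives `M² · winSum k = 1`.
  have hwin : ∀ k : ℤ × ℤ, (M : ℝ) ^ 2 * winSum L N g k = 1 := by
    intro k
    have hpar' := hpar (qdelta k) (memL2_qdelta k)
    rw [normSq2_qdelta] at hpar'
    rw [← hpar']
    unfold frameSum winSum
    rw [Finset.mul_sum]
    apply Finset.sum_congr rfl
    intro l _
    rw [← tsum_mul_left]
    apply tsum_congr
    intro n
    have hm : ∀ m ∈ msq M, ‖qpair (gaborAtom M N (g l) m n) (qdelta k)‖ ^ 2 =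
        ‖g l (k.1 - n.1 * (N : ℤ), k.2 - n.2 * (N : ℤ))‖ ^ 2 := by
      intro m _
      rw [qpair_qdelta, norm_star, gaborAtom_norm]
    rw [Finset.sum_congr rfl hm, Finset.sum_const]
    simp only [msq, Finset.card_product, Finset.card_range, nsmul_eq_mul]
    push_cast
    ring
  -- Step 2: orthonormality gives `‖g l‖² = 1`.
  have hnorm1 : ∀ l, l < L → normSq2 (g l) = 1 := by
    intro l hl
    have h0 : ((0, 0) : ℕ × ℕ) ∈ msq M := by
      simp [msq, hM]
    have hdiag := hon l l hl hl (0, 0) h0 (0, 0) h0 (0, 0) (0, 0)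
    rw [if_pos ⟨rfl, rfl, rfl⟩] at hdiag
    have hatom : gaborAtom M N (g l) (0, 0) (0, 0) = g l := by
      funext k
      simp [gaborAtom, eI_zero, eJ_zero]
    rw [hatom] at hdiag
    have hc : Summable fun j : ℤ × ℤ => ‖g l j‖ ^ 2 := hg l hl
    let Φ : ℝ →L[ℝ] ℍ := LinearMap.toContinuousLinearMap (Algebra.linearMap ℝ ℍ)
    have hΦapp : ∀ x : ℝ, Φ x = (x : ℍ) := fun x => rfl
    have key : qpair (g l) (g l) = ((normSq2 (g l) : ℝ) : ℍ) := by
      unfold qpair normSq2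
      rw [← hΦapp, Φ.map_tsum hc]
      apply tsum_congr
      intro j
      rw [star_mul_self_eq, hΦapp]
    rw [key] at hdiag
    apply Quaternion.coe_injective
    rw [Quaternion.coe_one]
    exact hdiag
  -- Step 3: summing over a fundamental domain.
  have hsum : ∀ l, l < L → ∑ κ : Fin N × Fin N, ∑' n : ℤ × ℤ,
      ‖g l ((κ.1 : ℤ) - n.1 * N, (κ.2 : ℤ) - n.2 * N)‖ ^ 2 = 1 := by
    intro l hl
    rw [reindex_sum N hN (fun j => ‖g l j‖ ^ 2) (hg l hl)]
    exact hnorm1 l hl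
  have e2 : ∑ κ : Fin N × Fin N, winSum L N g ((κ.1 : ℤ), (κ.2 : ℤ)) = (L : ℝ) := by
    unfold winSum
    rw [Finset.sum_comm]
    rw [Finset.sum_congr rfl (fun l hl => hsum l (Finset.mem_range.mp hl))]
    simp
  have e1 : ∑ κ : Fin N × Fin N, winSum L N g ((κ.1 : ℤ), (κ.2 : ℤ)) =
      (N : ℝ) ^ 2 * ((M : ℝ) ^ 2)⁻¹ := by
    have hM0 : ((M : ℝ) ^ 2) ≠ 0 := by positivity
    have hval : ∀ κ : Fin N × Fin N,
        winSum L N g ((κ.1 : ℤ), (κ.2 : ℤ)) = ((M : ℝ) ^ 2)⁻¹ := by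
      intro κ
      have h := hwin ((κ.1 : ℤ), (κ.2 : ℤ))
      field_simp
      linarith
    rw [Finset.sum_congr rfl (fun κ _ => hval κ), Finset.sum_const]
    simp only [Finset.card_univ, Fintype.card_prod, Fintype.card_fin, nsmul_eq_mul]
    push_cast
    ring
  -- Step 4: `N² = L · M²` as naturals.
  have hnat : N ^ 2 = L * M ^ 2 := by
    have hM0 : ((M : ℝ) ^ 2) ≠ 0 := by positivity
    have hreal : ((N ^ 2 : ℕ) : ℝ) = ((L * M ^ 2 : ℕ) : ℝ) := by
      push_cast
      have := e1.symm.trans e2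
      field_simp at this
      linarith
    exact_mod_cast hreal
  -- Step 5: conclude `L` is a perfect square.
  have hdvd2 : M ^ 2 ∣ N ^ 2 := ⟨L, by rw [hnat]; ring⟩
  have hdvd : M ∣ N := (Nat.pow_dvd_pow_iff two_ne_zero).mp hdvd2
  refine ⟨N / M, Nat.div_pos (Nat.le_of_dvd hN hdvd) hM, ?_⟩
  have hNM : M * (N / M) = N := Nat.mul_div_cancel' hdvd
  have hsq : L * M ^ 2 = (N / M) ^ 2 * M ^ 2 := by
    have h' : (N / M) ^ 2 * M ^ 2 = N ^ 2 := by
      rw [← mul_pow, Nat.div_mul_cancel hdvd]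
    rw [h']
    exact hnat.symm
  have hM2 : 0 < M ^ 2 := by positivity
  exact Nat.eq_of_mul_eq_mul_right hM2 hsq
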